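/- arXiv:2509.04090 — 7 statements merged into one kernel-verified Lean document; each statement's English description precedes it below -/
import Mathlib

section
/- The function f : ℝ × ℝ → ℝ defined by f(x,y) = e^y / x is strictly convex on the set {(x,y) : x > 0}. -/
/-! Write `exp y / x = exp (y - log x)`. The exponent is convex, and strictly so along segments
whose endpoints have different `x` (strict concavity of `log`); along the remaining segments
(same `x`, different `y`) the exponent takes different values at the endpoints, so the strict
convexity of `exp` itself gives the strict inequality. -/

open Real Set

theorem StrictConvexOn.comp_convexOn_of_strict_on_level_sets {E : Type*} [AddCommGroup E]
    [Module ℝ E] {s : Set E} {f : E → ℝ} {g : ℝ → ℝ}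
    (hg : StrictConvexOn ℝ univ g) (hf : ConvexOn ℝ s f) (hg' : StrictMono g)
    (hf' : ∀ ⦃x⦄, x ∈ s → ∀ ⦃y⦄, y ∈ s → x ≠ y → f x = f y → ∀ ⦃a b : ℝ⦄, 0 < a → 0 < b →
      a + b = 1 → f (a • x + b • y) < a • f x + b • f y) :
    StrictConvexOn ℝ s (g ∘ f) := by
  refine ⟨hf.1, fun x hx y hy hxy a b ha hb hab ↦ ?_⟩
  by_cases hfxy : f x = f y
  · calc g (f (a • x + b • y)) < g (a • f x + b • f y) :=
          hg' (hf' hx hy hxy hfxy ha hb hab)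
      _ = a • g (f x) + b • g (f y) := by
          rw [← hfxy, ← add_smul, hab, one_smul, ← add_smul, hab, one_smul]
  · calc g (f (a • x + b • y)) ≤ g (a • f x + b • f y) :=
          hg'.monotone (hf.2 hx hy ha.le hb.le hab)
      _ < a • g (f x) + b • g (f y) := hg.2 (mem_univ _) (mem_univ _) hfxy ha hb hab

theorem convexOn_snd_sub_log_fst :
    ConvexOn ℝ {p : ℝ × ℝ | 0 < p.1} (fun p ↦ p.2 - log p.1) :=
  ((LinearMap.snd ℝ ℝ ℝ).convexOn convex_univ |>.subset (subset_univ _)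
    ((convex_Ioi 0).linear_preimage (LinearMap.fst ℝ ℝ ℝ))).sub
    (strictConcaveOn_log_Ioi.concaveOn.comp_linearMap (LinearMap.fst ℝ ℝ ℝ))

theorem snd_sub_log_fst_lt_of_fst_ne {p q : ℝ × ℝ} (hp : 0 < p.1) (hq : 0 < q.1)
    (hpq : p.1 ≠ q.1) {a b : ℝ} (ha : 0 < a) (hb : 0 < b) (hab : a + b = 1) :
    (a • p + b • q).2 - log (a • p + b • q).1 < a • (p.2 - log p.1) + b • (q.2 - log q.1) := by
  have hlog := strictConcaveOn_log_Ioi.2 hp hq hpq ha hb hab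
  simp only [Prod.fst_add, Prod.snd_add, Prod.smul_fst, Prod.smul_snd, smul_eq_mul] at hlog ⊢
  linarith

theorem stmt_1 :
    StrictConvexOn ℝ {p : ℝ × ℝ | 0 < p.1} (fun p : ℝ × ℝ => Real.exp p.2 / p.1) := by
  have hexp : StrictConvexOn ℝ {p : ℝ × ℝ | 0 < p.1} (exp ∘ fun p ↦ p.2 - log p.1) := by
    refine strictConvexOn_exp.comp_convexOn_of_strict_on_level_sets convexOn_snd_sub_log_fst
      exp_strictMono ?_
    rintro p hp q hq hpq hlevel a b ha hb hab
    refine snd_sub_log_fst_lt_of_fst_ne hp hq (fun hfst ↦ hpq ?_) ha hb hab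
    exact Prod.ext hfst (by simpa [hfst] using hlevel)
  refine hexp.congr fun p (hp : 0 < p.1) ↦ ?_
  simp only [Function.comp, exp_sub, exp_log hp]
end

section
/- Let A, R, G, α be T-periodic continuous functions with values: A(t) an n×n real matrix, R(t), G(t) symmetric positive semidefinite n×n matrices, α(t) ∈ ℝ. Suppose P, Q are continuously differentiable T-periodic n×n-matrix-valued functions satisfying P'(t) = A(t)P(t) + P(t)A(t)ᵀ + α(t)P(t) + R(t) and −Q'(t) = A(t)ᵀQ(t) + Q(t)A(t) + α(t)Q(t) + G(t) for all t. Then ∫₀ᵀ trace(Q(t)R(t)) dt = ∫₀ᵀ trace(P(t)G(t)) dt. -/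
/-! Along solutions of the two Lyapunov equations, `t ↦ trace (Q t * P t)` has derivative
`trace (Q R) - trace (P G)`: the terms in `A` cancel by cyclicity of the trace and the terms in `α`
cancel outright. As `trace (Q P)` is `T`-periodic, the derivative integrates to zero over a period. -/

open Matrix MeasureTheory

namespace Matrix

variable {m ι 𝕜 : Type*} [Fintype m] [Fintype ι]

theorem hasDerivAt_trace_mul [NontriviallyNormedField 𝕜] {X : 𝕜 → Matrix m ι 𝕜}
    {Y : 𝕜 → Matrix ι m 𝕜} {X' : Matrix m ι 𝕜} {Y' : Matrix ι m 𝕜} {t : 𝕜}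
    (hX : ∀ i j, HasDerivAt (fun s => X s i j) (X' i j) t)
    (hY : ∀ i j, HasDerivAt (fun s => Y s i j) (Y' i j) t) :
    HasDerivAt (fun s => (X s * Y s).trace) ((X' * Y t).trace + (X t * Y').trace) t := by
  simp only [trace, diag, mul_apply, ← Finset.sum_add_distrib]
  exact HasDerivAt.fun_sum fun i _ => HasDerivAt.fun_sum fun k _ => (hX i k).fun_mul (hY k i)

theorem trace_lyapunov_dual [CommRing 𝕜] (A P Q R G : Matrix ι ι 𝕜) (a : 𝕜) :
    (-(Aᵀ * Q + Q * A + a • Q + G) * P).trace + (Q * (A * P + P * Aᵀ + a • P + R)).trace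
      = (Q * R).trace - (P * G).trace := by
  have hcycle : (Q * (P * Aᵀ)).trace = (Aᵀ * (Q * P)).trace := by
    rw [← Matrix.mul_assoc, trace_mul_cycle, Matrix.mul_assoc]
  simp only [Matrix.neg_mul, Matrix.add_mul, Matrix.mul_add, trace_neg, trace_add,
    Matrix.smul_mul, Matrix.mul_smul, trace_smul, Matrix.mul_assoc, hcycle,
    trace_mul_comm G P]
  ring

end Matrix

theorem stmt_4_general (n : ℕ) (T : ℝ)
    (A R G : ℝ → Matrix (Fin n) (Fin n) ℝ) (α : ℝ → ℝ)
    (hRcont : ∀ i j, Continuous fun t => R t i j)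
    (hGcont : ∀ i j, Continuous fun t => G t i j)
    (P Q P' Q' : ℝ → Matrix (Fin n) (Fin n) ℝ)
    (hPdiff : ∀ t i j, HasDerivAt (fun s => P s i j) (P' t i j) t)
    (hQdiff : ∀ t i j, HasDerivAt (fun s => Q s i j) (Q' t i j) t)
    (hPper : ∀ t, P (t + T) = P t) (hQper : ∀ t, Q (t + T) = Q t)
    (hPeq : ∀ t, P' t = A t * P t + P t * (A t)ᵀ + α t • P t + R t)
    (hQeq : ∀ t, -Q' t = (A t)ᵀ * Q t + Q t * A t + α t • Q t + G t) :
    ∫ t in (0 : ℝ)..T, (Q t * R t).trace = ∫ t in (0 : ℝ)..T, (P t * G t).trace := by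
  have hPcont : Continuous P := continuous_matrix fun i j =>
    continuous_iff_continuousAt.2 fun t => (hPdiff t i j).continuousAt
  have hQcont : Continuous Q := continuous_matrix fun i j =>
    continuous_iff_continuousAt.2 fun t => (hQdiff t i j).continuousAt
  have hQR : Continuous fun t => (Q t * R t).trace :=
    (hQcont.matrix_mul (continuous_matrix hRcont)).matrix_trace
  have hPG : Continuous fun t => (P t * G t).trace :=
    (hPcont.matrix_mul (continuous_matrix hGcont)).matrix_trace
  have hderiv : ∀ t, HasDerivAt (fun s => (Q s * P s).trace)
      ((Q t * R t).trace - (P t * G t).trace) t := fun t => by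
    have := hasDerivAt_trace_mul (hQdiff t) (hPdiff t)
    rwa [← neg_neg (Q' t), hQeq, hPeq, trace_lyapunov_dual] at this
  have hperiod : Q T * P T = Q 0 * P 0 := by
    simpa only [zero_add] using congrArg₂ (· * ·) (hQper 0) (hPper 0)
  have hzero := intervalIntegral.integral_eq_sub_of_hasDerivAt (fun t _ => hderiv t)
    ((hQR.sub hPG).intervalIntegrable 0 T)
  rw [hperiod, sub_self, intervalIntegral.integral_sub (hQR.intervalIntegrable 0 T)
    (hPG.intervalIntegrable 0 T)] at hzero
  exact sub_eq_zero.1 hzero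

theorem stmt_4 (n : ℕ) (T : ℝ) (hT : 0 < T)
    (A R G : ℝ → Matrix (Fin n) (Fin n) ℝ) (α : ℝ → ℝ)
    (hAcont : ∀ i j, Continuous fun t => A t i j)
    (hRcont : ∀ i j, Continuous fun t => R t i j)
    (hGcont : ∀ i j, Continuous fun t => G t i j)
    (hαcont : Continuous α)
    (hAper : ∀ t, A (t + T) = A t) (hRper : ∀ t, R (t + T) = R t)
    (hGper : ∀ t, G (t + T) = G t) (hαper : ∀ t, α (t + T) = α t)
    (hRpsd : ∀ t, (R t).PosSemidef) (hGpsd : ∀ t, (G t).PosSemidef)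
    (P Q P' Q' : ℝ → Matrix (Fin n) (Fin n) ℝ)
    (hPdiff : ∀ t i j, HasDerivAt (fun s => P s i j) (P' t i j) t)
    (hQdiff : ∀ t i j, HasDerivAt (fun s => Q s i j) (Q' t i j) t)
    (hPper : ∀ t, P (t + T) = P t) (hQper : ∀ t, Q (t + T) = Q t)
    (hPeq : ∀ t, P' t = A t * P t + P t * (A t)ᵀ + α t • P t + R t)
    (hQeq : ∀ t, -Q' t = (A t)ᵀ * Q t + Q t * A t + α t • Q t + G t) :
    ∫ t in (0 : ℝ)..T, (Q t * R t).trace = ∫ t in (0 : ℝ)..T, (P t * G t).trace :=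
  stmt_4_general n T A R G α hRcont hGcont P Q P' Q' hPdiff hQdiff hPper hQper hPeq hQeq
end

section
/- Let A, B, C, α be T-periodic continuous matrix-valued (resp. scalar for α, with α(t) > 0) functions, and let P, Q be T-periodic solutions of P'(t) = A(t)P(t) + P(t)A(t)ᵀ + α(t)P(t) + (1/α(t))B(t)B(t)ᵀ and −Q'(t) = Q(t)A(t) + A(t)ᵀQ(t) + α(t)Q(t) + C(t)ᵀC(t). Then (1/T)∫₀ᵀ trace(C(t)P(t)C(t)ᵀ) dt = (1/T)∫₀ᵀ trace(B(t)ᵀQ(t)B(t))/α(t) dt. -/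
/-!
Along solutions of the two Lyapunov equations the terms in `A` and `α` cancel in
`d/dt trace (Q P) = trace (Q' P) + trace (Q P')`, leaving `trace (Q R) - trace (G P)` with
`R = B Bᵀ / α` and `G = Cᵀ C`. Integrating over one period, the boundary term
`trace (Q P)` vanishes by periodicity, and cyclicity of the trace turns `trace (G P)` and
`trace (Q R)` into the two integrands.
-/

open Matrix MeasureTheory

theorem Matrix.hasDerivAt_trace_mul_s5 {𝕜 : Type*} [NontriviallyNormedField 𝕜]
    {ι κ : Type*} [Fintype ι] [Fintype κ] {Q : 𝕜 → Matrix ι κ 𝕜} {P : 𝕜 → Matrix κ ι 𝕜}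
    {Q' : Matrix ι κ 𝕜} {P' : Matrix κ ι 𝕜} {t : 𝕜}
    (hQ : ∀ i j, HasDerivAt (fun s => Q s i j) (Q' i j) t)
    (hP : ∀ i j, HasDerivAt (fun s => P s i j) (P' i j) t) :
    HasDerivAt (fun s => (Q s * P s).trace) ((Q' * P t).trace + (Q t * P').trace) t := by
  simp only [trace, diag, mul_apply, ← Finset.sum_add_distrib]
  exact HasDerivAt.fun_sum fun i _ => HasDerivAt.fun_sum fun j _ => (hQ i j).mul (hP j i)

theorem Matrix.trace_lyapunov_pair {R n : Type*} [CommRing R] [Fintype n]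
    (A P Q F G : Matrix n n R) (a : R) :
    (-(Q * A + Aᵀ * Q + a • Q + G) * P).trace + (Q * (A * P + P * Aᵀ + a • P + F)).trace =
      (Q * F).trace - (G * P).trace := by
  have hA : (Aᵀ * (Q * P)).trace = (Q * (P * Aᵀ)).trace := by
    rw [trace_mul_comm, Matrix.mul_assoc]
  simp only [Matrix.neg_mul, Matrix.add_mul, Matrix.mul_add, Matrix.smul_mul, Matrix.mul_smul,
    trace_neg, trace_add, trace_smul, Matrix.mul_assoc, hA]
  ring

theorem integral_trace_mul_eq_of_lyapunov {n : Type*} [Fintype n] {T : ℝ}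
    {A P Q P' Q' F G : ℝ → Matrix n n ℝ} {α : ℝ → ℝ}
    (hF : Continuous F) (hG : Continuous G)
    (hPdiff : ∀ t i j, HasDerivAt (fun s => P s i j) (P' t i j) t)
    (hQdiff : ∀ t i j, HasDerivAt (fun s => Q s i j) (Q' t i j) t)
    (hPper : P T = P 0) (hQper : Q T = Q 0)
    (hPeq : ∀ t, P' t = A t * P t + P t * (A t)ᵀ + α t • P t + F t)
    (hQeq : ∀ t, -Q' t = Q t * A t + (A t)ᵀ * Q t + α t • Q t + G t) :
    ∫ t in (0 : ℝ)..T, (G t * P t).trace = ∫ t in (0 : ℝ)..T, (Q t * F t).trace := by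
  have hP : Continuous P := continuous_matrix fun i j =>
    continuous_iff_continuousAt.2 fun t => (hPdiff t i j).continuousAt
  have hQ : Continuous Q := continuous_matrix fun i j =>
    continuous_iff_continuousAt.2 fun t => (hQdiff t i j).continuousAt
  have hGP : IntervalIntegrable (fun t => (G t * P t).trace) volume 0 T :=
    (hG.matrix_mul hP).matrix_trace.intervalIntegrable 0 T
  have hQF : IntervalIntegrable (fun t => (Q t * F t).trace) volume 0 T :=
    (hQ.matrix_mul hF).matrix_trace.intervalIntegrable 0 T
  have hderiv : ∀ t, HasDerivAt (fun s => (Q s * P s).trace)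
      ((Q t * F t).trace - (G t * P t).trace) t := by
    intro t
    rw [← trace_lyapunov_pair (A t) (P t) (Q t) (F t) (G t) (α t), ← hQeq, neg_neg, ← hPeq]
    exact hasDerivAt_trace_mul_s5 (hQdiff t) (hPdiff t)
  have hzero := intervalIntegral.integral_eq_sub_of_hasDerivAt (fun t _ => hderiv t) (hQF.sub hGP)
  rw [hPper, hQper, sub_self, intervalIntegral.integral_sub hQF hGP] at hzero
  exact (sub_eq_zero.1 hzero).symm

theorem stmt_5_general (n m k : ℕ) (T : ℝ)
    (A : ℝ → Matrix (Fin n) (Fin n) ℝ)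
    (B : ℝ → Matrix (Fin n) (Fin m) ℝ)
    (C : ℝ → Matrix (Fin k) (Fin n) ℝ) (α : ℝ → ℝ)
    (hBcont : ∀ i j, Continuous fun t => B t i j)
    (hCcont : ∀ i j, Continuous fun t => C t i j)
    (hαcont : Continuous α) (hαpos : ∀ t, 0 < α t)
    (P Q P' Q' : ℝ → Matrix (Fin n) (Fin n) ℝ)
    (hPdiff : ∀ t i j, HasDerivAt (fun s => P s i j) (P' t i j) t)
    (hQdiff : ∀ t i j, HasDerivAt (fun s => Q s i j) (Q' t i j) t)
    (hPper : ∀ t, P (t + T) = P t) (hQper : ∀ t, Q (t + T) = Q t)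
    (hPeq : ∀ t, P' t = A t * P t + P t * (A t)ᵀ + α t • P t + (α t)⁻¹ • (B t * (B t)ᵀ))
    (hQeq : ∀ t, -Q' t = Q t * A t + (A t)ᵀ * Q t + α t • Q t + (C t)ᵀ * C t) :
    (1 / T) * ∫ t in (0 : ℝ)..T, (C t * P t * (C t)ᵀ).trace =
      (1 / T) * ∫ t in (0 : ℝ)..T, ((B t)ᵀ * Q t * B t).trace / α t := by
  have hB : Continuous B := continuous_matrix hBcont
  have hC : Continuous C := continuous_matrix hCcont
  have hF : Continuous fun t => (α t)⁻¹ • (B t * (B t)ᵀ) :=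
    (hαcont.inv₀ fun t => (hαpos t).ne').smul (hB.matrix_mul hB.matrix_transpose)
  have hduality := integral_trace_mul_eq_of_lyapunov hF (hC.matrix_transpose.matrix_mul hC)
    hPdiff hQdiff (by simpa using hPper 0) (by simpa using hQper 0) hPeq hQeq
  congr 1
  convert hduality using 3 with t
  · rw [trace_mul_cycle, Matrix.mul_assoc]
  · rw [Matrix.mul_smul, trace_smul, smul_eq_mul, inv_mul_eq_div, trace_mul_cycle', Matrix.mul_assoc]

theorem stmt_5 (n m k : ℕ) (T : ℝ) (hT : 0 < T)
    (A : ℝ → Matrix (Fin n) (Fin n) ℝ)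
    (B : ℝ → Matrix (Fin n) (Fin m) ℝ)
    (C : ℝ → Matrix (Fin k) (Fin n) ℝ) (α : ℝ → ℝ)
    (hAcont : ∀ i j, Continuous fun t => A t i j)
    (hBcont : ∀ i j, Continuous fun t => B t i j)
    (hCcont : ∀ i j, Continuous fun t => C t i j)
    (hαcont : Continuous α) (hαpos : ∀ t, 0 < α t)
    (hAper : ∀ t, A (t + T) = A t) (hBper : ∀ t, B (t + T) = B t)
    (hCper : ∀ t, C (t + T) = C t) (hαper : ∀ t, α (t + T) = α t)
    (P Q P' Q' : ℝ → Matrix (Fin n) (Fin n) ℝ)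
    (hPdiff : ∀ t i j, HasDerivAt (fun s => P s i j) (P' t i j) t)
    (hQdiff : ∀ t i j, HasDerivAt (fun s => Q s i j) (Q' t i j) t)
    (hPper : ∀ t, P (t + T) = P t) (hQper : ∀ t, Q (t + T) = Q t)
    (hPeq : ∀ t, P' t = A t * P t + P t * (A t)ᵀ + α t • P t + (α t)⁻¹ • (B t * (B t)ᵀ))
    (hQeq : ∀ t, -Q' t = Q t * A t + (A t)ᵀ * Q t + α t • Q t + (C t)ᵀ * C t) :
    (1 / T) * ∫ t in (0 : ℝ)..T, (C t * P t * (C t)ᵀ).trace =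
      (1 / T) * ∫ t in (0 : ℝ)..T, ((B t)ᵀ * Q t * B t).trace / α t :=
  stmt_5_general n m k T A B C α hBcont hCcont hαcont hαpos P Q P' Q' hPdiff hQdiff hPper hQper hPeq
    hQeq
end

section
/- Consider the scalar system x'(t) = a·x(t) + b·w(t) with constants a < 0, b ≠ 0, and |w(t)| ≤ 1 for all t. For any constant α with 0 < α < −2a, every solution with x(t₀)² ≤ p satisfies x(t)² ≤ p for all t ≥ t₀, where p = b²/(α(−2a − α)) (equivalently p solves 2ap + αp + b²/α = 0). -/
/-!
Along a trajectory, Young's inequality `2 b w x ≤ α x² + b² / α` gives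
`d/dt (x²) ≤ (2a + α) x² + b² / α = (2a + α) (x² - p)`, by the choice of `p`.
A Grönwall estimate for `x² - p` then shows that it stays nonpositive once it is.
-/

theorem two_mul_mul_le_mul_sq_add_sq_div {α : ℝ} (hα : 0 < α) (u v : ℝ) :
    2 * u * v ≤ α * u ^ 2 + v ^ 2 / α := by
  have nonneg : 0 ≤ (α * u - v) ^ 2 / α := by positivity
  have expand : (α * u - v) ^ 2 / α = α * u ^ 2 + v ^ 2 / α - 2 * u * v := by
    field_simp
    ring
  linarith

theorem le_of_hasDerivAt_le_mul_sub {f f' : ℝ → ℝ} {K p t₀ : ℝ}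
    (hf : ∀ t ≥ t₀, HasDerivAt f (f' t) t) (hbound : ∀ t ≥ t₀, f' t ≤ K * (f t - p))
    (h₀ : f t₀ ≤ p) : ∀ t ≥ t₀, f t ≤ p := by
  intro t ht
  have hg : ∀ s ≥ t₀, HasDerivAt (fun s => f s - p) (f' s) s :=
    fun s hs => (hf s hs).sub_const p
  have gronwall := le_gronwallBound_of_liminf_deriv_right_le (f := fun s => f s - p) (f' := f')
    (δ := f t₀ - p) (K := K) (ε := 0) (a := t₀) (b := t)
    (fun s hs => (hg s hs.1).continuousAt.continuousWithinAt)
    (fun s hs _ hr => (hg s hs.1).hasDerivWithinAt.liminf_right_slope_le hr) le_rfl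
    (fun s hs => by simpa using hbound s hs.1) t ⟨ht, le_rfl⟩
  rw [gronwallBound_ε0] at gronwall
  have : (f t₀ - p) * Real.exp (K * (t - t₀)) ≤ 0 :=
    mul_nonpos_of_nonpos_of_nonneg (sub_nonpos.2 h₀) (Real.exp_pos _).le
  linarith

theorem two_mul_mul_add_mul_le_of_abs_le_one {a b α x w : ℝ} (hα : 0 < α) (hw : |w| ≤ 1) :
    2 * x * (a * x + b * w) ≤ (2 * a + α) * x ^ 2 + b ^ 2 / α := by
  have hbw : (b * w) ^ 2 ≤ b ^ 2 := by
    rw [mul_pow]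
    exact mul_le_of_le_one_right (sq_nonneg b) ((sq_le_one_iff_abs_le_one w).2 hw)
  have young := two_mul_mul_le_mul_sq_add_sq_div hα x (b * w)
  have : (b * w) ^ 2 / α ≤ b ^ 2 / α := div_le_div_of_nonneg_right hbw hα.le
  linarith

theorem stmt_6_general (a b α p : ℝ) (hα : 0 < α) (hα2 : α < -2 * a)
    (hp : p = b ^ 2 / (α * (-2 * a - α)))
    (x w : ℝ → ℝ) (hw : ∀ t, |w t| ≤ 1)
    (hx : ∀ t, HasDerivAt x (a * x t + b * w t) t)
    (t₀ : ℝ) (h0 : x t₀ ^ 2 ≤ p) :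
    ∀ t ≥ t₀, x t ^ 2 ≤ p := by
  have hp' : b ^ 2 / α = (-2 * a - α) * p := by
    have : -2 * a - α ≠ 0 := by linarith
    rw [hp, ← div_div, mul_div_cancel₀ _ this]
  refine le_of_hasDerivAt_le_mul_sub (f := fun t => x t ^ 2) (K := 2 * a + α)
    (fun t _ => by simpa using (hx t).fun_pow 2) (fun t _ => ?_) h0
  calc 2 * x t * (a * x t + b * w t) ≤ (2 * a + α) * x t ^ 2 + b ^ 2 / α :=
        two_mul_mul_add_mul_le_of_abs_le_one hα (hw t)
    _ = (2 * a + α) * (x t ^ 2 - p) := by rw [hp']; ring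

theorem stmt_6 (a b α p : ℝ) (ha : a < 0) (hb : b ≠ 0) (hα : 0 < α) (hα2 : α < -2 * a)
    (hp : p = b ^ 2 / (α * (-2 * a - α)))
    (x w : ℝ → ℝ) (hw : ∀ t, |w t| ≤ 1)
    (hx : ∀ t, HasDerivAt x (a * x t + b * w t) t)
    (t₀ : ℝ) (h0 : x t₀ ^ 2 ≤ p) :
    ∀ t ≥ t₀, x t ^ 2 ≤ p :=
  stmt_6_general a b α p hα hα2 hp x w hw hx t₀ h0
end

section
/- Let a < 0, b ≠ 0, c ≠ 0 be real constants and fix α ∈ (0, −2a). Define p = b²/(α(−2a − α)) and q = c²/(−2a − α). Then α* := √(b²q / (q p)) = √(b²/p) satisfies α* = √(α(−2a − α)), and the fixed-point iteration αᵢ₊₁ = √(αᵢ(−2a − αᵢ)) starting from any α₀ ∈ (0, −2a) converges to −a. -/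
/-!
Writing `α = m - d` with `m = -a`, the update `α ↦ √(α (2m - α)) = √(m² - d²)` moves `α` to distance
`m - √(m² - d²) = d² / (m + √(m² - d²)) ≤ d² / m` from `m`. So the distance to `m`, measured in units
of `m`, is at least squared at every step; starting in `(0, 2m)` it is below `1`, hence tends to `0`
(quadratically).
-/

open Filter Topology Set

noncomputable def alphaUpdate (m x : ℝ) : ℝ := √(x * (2 * m - x))

theorem alphaUpdate_le {m : ℝ} (hm : 0 ≤ m) (x : ℝ) : alphaUpdate m x ≤ m := by
  refine Real.sqrt_le_iff.mpr ⟨hm, ?_⟩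
  nlinarith [sq_nonneg (m - x)]

theorem abs_sub_alphaUpdate_le {m : ℝ} (hm : 0 < m) (x : ℝ) :
    |m - alphaUpdate m x| ≤ |m - x| ^ 2 / m := by
  set s := alphaUpdate m x
  have hs_le : s ≤ m := alphaUpdate_le hm.le x
  have hs_nonneg : 0 ≤ s := Real.sqrt_nonneg _
  have hs_sq : m ^ 2 - (m - x) ^ 2 ≤ s ^ 2 := by
    calc m ^ 2 - (m - x) ^ 2 = x * (2 * m - x) := by ring
      _ ≤ max (x * (2 * m - x)) 0 := le_max_left _ _
      _ = s ^ 2 := Real.sq_sqrt'.symm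
  rw [abs_of_nonneg (sub_nonneg.mpr hs_le), sq_abs, le_div_iff₀ hm]
  -- `(m - s) m ≤ (m - s)(m + s) = m² - s²`
  nlinarith [mul_le_mul_of_nonneg_left hs_nonneg (sub_nonneg.mpr hs_le)]

theorem abs_sub_le_of_eq_alphaUpdate {m : ℝ} (hm : 0 < m) {x : ℕ → ℝ}
    (hx : ∀ n, x (n + 1) = alphaUpdate m (x n)) (n : ℕ) :
    |m - x n| ≤ m * (|m - x 0| / m) ^ 2 ^ n := by
  induction n with
  | zero => rw [pow_zero, pow_one, mul_div_cancel₀ _ hm.ne']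
  | succ n ih =>
    calc |m - x (n + 1)| ≤ |m - x n| ^ 2 / m := hx n ▸ abs_sub_alphaUpdate_le hm (x n)
      _ ≤ (m * (|m - x 0| / m) ^ 2 ^ n) ^ 2 / m := by gcongr
      _ = m * (|m - x 0| / m) ^ 2 ^ (n + 1) := by field_simp; ring

theorem tendsto_of_eq_alphaUpdate {m : ℝ} {x : ℕ → ℝ} (h0 : x 0 ∈ Ioo 0 (2 * m))
    (hx : ∀ n, x (n + 1) = alphaUpdate m (x n)) : Tendsto x atTop (𝓝 m) := by
  have hm : 0 < m := by linarith [h0.1, h0.2]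
  set r := |m - x 0| / m
  have hr0 : 0 ≤ r := by positivity
  have hr1 : r < 1 := by
    rw [div_lt_one hm, abs_lt]
    constructor <;> linarith [h0.1, h0.2]
  have hpow : Tendsto (fun n : ℕ => r ^ 2 ^ n) atTop (𝓝 0) :=
    (tendsto_pow_atTop_nhds_zero_of_lt_one hr0 hr1).comp
      (tendsto_pow_atTop_atTop_of_one_lt one_lt_two)
  rw [tendsto_iff_norm_sub_tendsto_zero]
  refine squeeze_zero (fun _ => norm_nonneg _) (fun n => ?_) (by simpa using hpow.const_mul m)
  rw [Real.norm_eq_abs, abs_sub_comm]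
  exact abs_sub_le_of_eq_alphaUpdate hm hx n

theorem stmt_8_general (a b c : ℝ) (hb : b ≠ 0) (hc : c ≠ 0)
    (α : ℝ) (hα : α ∈ Set.Ioo (0 : ℝ) (-2 * a))
    (p q : ℝ) (hp : p = b ^ 2 / (α * (-2 * a - α))) (hq : q = c ^ 2 / (-2 * a - α)) :
    Real.sqrt (b ^ 2 * q / (q * p)) = Real.sqrt (α * (-2 * a - α)) ∧
    ∀ αs : ℕ → ℝ, αs 0 ∈ Set.Ioo (0 : ℝ) (-2 * a) →
      (∀ i, αs (i + 1) = Real.sqrt (αs i * (-2 * a - αs i))) →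
      Filter.Tendsto αs Filter.atTop (nhds (-a)) := by
  refine ⟨?_, fun αs h0 hrec => ?_⟩
  · have hα0 : α ≠ 0 := hα.1.ne'
    have hgap : -2 * a - α ≠ 0 := (sub_pos.mpr hα.2).ne'
    rw [hp, hq]
    field_simp
  · refine tendsto_of_eq_alphaUpdate (by rwa [mul_neg, ← neg_mul]) fun i => ?_
    rw [hrec, alphaUpdate, mul_neg, ← neg_mul]

theorem stmt_8 (a b c : ℝ) (ha : a < 0) (hb : b ≠ 0) (hc : c ≠ 0)
    (α : ℝ) (hα : α ∈ Set.Ioo (0 : ℝ) (-2 * a))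
    (p q : ℝ) (hp : p = b ^ 2 / (α * (-2 * a - α))) (hq : q = c ^ 2 / (-2 * a - α)) :
    Real.sqrt (b ^ 2 * q / (q * p)) = Real.sqrt (α * (-2 * a - α)) ∧
    ∀ αs : ℕ → ℝ, αs 0 ∈ Set.Ioo (0 : ℝ) (-2 * a) →
      (∀ i, αs (i + 1) = Real.sqrt (αs i * (-2 * a - αs i))) →
      Filter.Tendsto αs Filter.atTop (nhds (-a)) :=
  stmt_8_general a b c hb hc α hα p q hp hq
end

section
/- Let A be an n×n real matrix, B an n×m real matrix, P a symmetric positive definite n×n matrix, and α > 0 a real number such that AP + PAᵀ + αP + (1/α)BBᵀ ⪯ 0 (negative semidefinite). Then for every solution of x'(t) = Ax(t) + Bw(t) with ‖w(t)‖ ≤ 1 for all t, the function V(t) = x(t)ᵀP⁻¹x(t) satisfies: V(t₀) ≤ 1 implies V(t) ≤ 1 for all t ≥ t₀. -/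
/-!
With `y = P⁻¹ x`, the Lyapunov inequality tested at `y` bounds `2 (A x) ⬝ y` by
`-α V - α⁻¹ |Bᵀ y|²`, while Young's inequality bounds the disturbance term `2 (B w) ⬝ y` by
`α |w|² + α⁻¹ |Bᵀ y|²`. Hence `V' ≤ α (1 - V)`, so `(V - 1) e^{α t}` is nonincreasing and
`V` cannot leave the sublevel set `{V ≤ 1}`.
-/

open Matrix

namespace Matrix

variable {ι κ : Type*} [Fintype ι] [Fintype κ]

lemma IsSymm.dotProduct_mulVec_comm {R : Type*} [CommSemiring R] {Q : Matrix ι ι R}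
    (hQ : Q.IsSymm) (u v : ι → R) : u ⬝ᵥ Q *ᵥ v = v ⬝ᵥ Q *ᵥ u := by
  simpa only [hQ.eq] using dotProduct_transpose_mulVec Q u v

lemma IsSymm.dotProduct_mulVec_lyapunov {R : Type*} [CommSemiring R] {A P : Matrix ι ι R}
    (hP : P.IsSymm) (B : Matrix ι κ R) (a b : R) (y : ι → R) :
    y ⬝ᵥ (A * P + P * Aᵀ + a • P + b • (B * Bᵀ)) *ᵥ y
      = 2 * (A *ᵥ (P *ᵥ y) ⬝ᵥ y) + a * (P *ᵥ y ⬝ᵥ y) + b * (Bᵀ *ᵥ y ⬝ᵥ Bᵀ *ᵥ y) := by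
  have hPA : y ⬝ᵥ P *ᵥ (Aᵀ *ᵥ y) = A *ᵥ (P *ᵥ y) ⬝ᵥ y := by
    rw [hP.dotProduct_mulVec_comm, dotProduct_comm, dotProduct_transpose_mulVec, dotProduct_comm]
  have hBB : y ⬝ᵥ B *ᵥ (Bᵀ *ᵥ y) = Bᵀ *ᵥ y ⬝ᵥ Bᵀ *ᵥ y := by
    rw [dotProduct_mulVec, ← mulVec_transpose]
  simp only [add_mulVec, dotProduct_add, smul_mulVec, dotProduct_smul, ← mulVec_mulVec, hPA,
    hBB, smul_eq_mul]
  rw [dotProduct_comm y (A *ᵥ _), dotProduct_comm y (P *ᵥ y)]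
  ring

end Matrix

section Young

variable {ι R : Type*} [Fintype ι] [Field R] [LinearOrder R] [IsStrictOrderedRing R]

lemma two_mul_le_mul_sq_add_inv_mul_sq {a : R} (ha : 0 < a) (u v : R) :
    2 * (u * v) ≤ a * u ^ 2 + a⁻¹ * v ^ 2 := by
  have key : a * u ^ 2 + a⁻¹ * v ^ 2 - 2 * (u * v) = a⁻¹ * (a * u - v) ^ 2 := by
    field_simp
    ring
  have : 0 ≤ a⁻¹ * (a * u - v) ^ 2 := by positivity
  linarith

lemma two_mul_dotProduct_le {a : R} (ha : 0 < a) (u v : ι → R) :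
    2 * (u ⬝ᵥ v) ≤ a * (u ⬝ᵥ u) + a⁻¹ * (v ⬝ᵥ v) := by
  simp only [dotProduct, Finset.mul_sum, ← Finset.sum_add_distrib]
  gcongr with i
  simpa only [sq] using two_mul_le_mul_sq_add_inv_mul_sq ha (u i) (v i)

end Young

lemma hasDerivAt_dotProduct_mulVec_self {ι : Type*} [Fintype ι] {Q : Matrix ι ι ℝ}
    (hQ : Q.IsSymm) {x : ℝ → ι → ℝ} {x' : ι → ℝ} {t : ℝ} (hx : HasDerivAt x x' t) :
    HasDerivAt (fun s => x s ⬝ᵥ Q *ᵥ x s) (2 * (x' ⬝ᵥ Q *ᵥ x t)) t := by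
  have hxi : ∀ i, HasDerivAt (fun s => x s i) (x' i) t := hasDerivAt_pi.1 hx
  have hQx : ∀ i, HasDerivAt (fun s => (Q *ᵥ x s) i) ((Q *ᵥ x') i) t := fun i =>
    HasDerivAt.fun_sum fun j _ => (hxi j).const_mul (Q i j)
  refine (HasDerivAt.fun_sum fun i (_ : i ∈ Finset.univ) => (hxi i).mul (hQx i)).congr_deriv ?_
  rw [Finset.sum_add_distrib, two_mul]
  congr 1
  exact hQ.dotProduct_mulVec_comm (x t) x'

lemma le_of_hasDerivAt_le_mul_sub_s10 {V V' : ℝ → ℝ} {a c t₀ : ℝ}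
    (hV : ∀ t, HasDerivAt V (V' t) t) (hV' : ∀ t, V' t ≤ a * (c - V t)) (h₀ : V t₀ ≤ c) :
    ∀ t ≥ t₀, V t ≤ c := by
  have hexp : ∀ t, HasDerivAt (fun s => Real.exp (a * s)) (Real.exp (a * t) * a) t := fun t => by
    simpa using ((hasDerivAt_id t).const_mul a).exp
  have hanti : Antitone fun t => (V t - c) * Real.exp (a * t) := by
    refine antitone_of_hasDerivAt_nonpos
      (f' := fun t => V' t * Real.exp (a * t) + (V t - c) * (Real.exp (a * t) * a))
      (fun t => ((hV t).sub_const c).mul (hexp t)) fun t => ?_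
    dsimp only [Pi.zero_apply]
    rw [show V' t * Real.exp (a * t) + (V t - c) * (Real.exp (a * t) * a)
      = (V' t + a * (V t - c)) * Real.exp (a * t) by ring]
    exact mul_nonpos_of_nonpos_of_nonneg (by linarith [hV' t]) (Real.exp_pos _).le
  intro t ht
  have h := (hanti ht).trans (mul_nonpos_of_nonpos_of_nonneg (sub_nonpos.2 h₀)
    (Real.exp_pos (a * t₀)).le)
  linarith [nonpos_of_mul_nonpos_left h (Real.exp_pos (a * t))]

lemma two_mul_dotProduct_inv_mulVec_le {ι κ : Type*} [Fintype ι] [DecidableEq ι] [Fintype κ]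
    {A P : Matrix ι ι ℝ} {B : Matrix ι κ ℝ} (hP : P.PosDef) {α : ℝ} (hα : 0 < α)
    (hLyap : (-(A * P + P * Aᵀ + α • P + α⁻¹ • (B * Bᵀ))).PosSemidef) (x : ι → ℝ) {w : κ → ℝ}
    (hw : w ⬝ᵥ w ≤ 1) :
    2 * ((A *ᵥ x + B *ᵥ w) ⬝ᵥ P⁻¹ *ᵥ x) ≤ α * (1 - x ⬝ᵥ P⁻¹ *ᵥ x) := by
  set y := P⁻¹ *ᵥ x
  set z := Bᵀ *ᵥ y
  have hPy : P *ᵥ y = x := by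
    rw [mulVec_mulVec, mul_nonsing_inv _ ((isUnit_iff_isUnit_det P).1 hP.isUnit), one_mulVec]
  have hLyap_y : 2 * (A *ᵥ x ⬝ᵥ y) + α * (x ⬝ᵥ y) + α⁻¹ * (z ⬝ᵥ z) ≤ 0 := by
    have h := hLyap.dotProduct_mulVec_nonneg y
    rw [star_trivial, neg_mulVec, dotProduct_neg,
      (isHermitian_iff_isSymm.1 hP.isHermitian).dotProduct_mulVec_lyapunov, hPy] at h
    linarith
  have hcross : 2 * (B *ᵥ w ⬝ᵥ y) ≤ α + α⁻¹ * (z ⬝ᵥ z) := by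
    rw [dotProduct_comm, dotProduct_mulVec, ← mulVec_transpose, dotProduct_comm]
    linarith [two_mul_dotProduct_le hα w z, mul_le_mul_of_nonneg_left hw hα.le]
  rw [add_dotProduct]
  linarith

theorem stmt_10 (n m : ℕ)
    (A : Matrix (Fin n) (Fin n) ℝ) (B : Matrix (Fin n) (Fin m) ℝ)
    (P : Matrix (Fin n) (Fin n) ℝ) (hP : P.PosDef) (α : ℝ) (hα : 0 < α)
    (hLyap : (-(A * P + P * Aᵀ + α • P + α⁻¹ • (B * Bᵀ))).PosSemidef)
    (x : ℝ → Fin n → ℝ) (w : ℝ → Fin m → ℝ)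
    (hw : ∀ t, ∑ i, (w t i) ^ 2 ≤ 1)
    (hx : ∀ t i, HasDerivAt (fun s => x s i) ((A.mulVec (x t) + B.mulVec (w t)) i) t)
    (t₀ : ℝ) (h0 : x t₀ ⬝ᵥ P⁻¹.mulVec (x t₀) ≤ 1) :
    ∀ t ≥ t₀, x t ⬝ᵥ P⁻¹.mulVec (x t) ≤ 1 := by
  have hPinv : P⁻¹.IsSymm := (isHermitian_iff_isSymm.1 hP.isHermitian).inv
  have hV : ∀ t, HasDerivAt (fun s => x s ⬝ᵥ P⁻¹ *ᵥ x s)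
      (2 * ((A *ᵥ x t + B *ᵥ w t) ⬝ᵥ P⁻¹ *ᵥ x t)) t := fun t =>
    hasDerivAt_dotProduct_mulVec_self hPinv (hasDerivAt_pi.2 (hx t))
  have hw' : ∀ t, w t ⬝ᵥ w t ≤ 1 := by simpa only [dotProduct, sq] using hw
  exact le_of_hasDerivAt_le_mul_sub_s10 hV
    (fun t => two_mul_dotProduct_inv_mulVec_le hP hα hLyap (x t) (hw' t)) h0
end

section
/- Let A, B be continuous T-periodic matrix functions and α a continuous T-periodic scalar function with α(t) > 0. If P is a continuously differentiable T-periodic symmetric-matrix-valued solution of P'(t) = A(t)P(t) + P(t)A(t)ᵀ + α(t)P(t) + (1/α(t))B(t)B(t)ᵀ, then for all t, P(t) ⪰ 0 provided P(t₀) ⪰ 0 for some t₀; moreover if P̃ is any continuously differentiable T-periodic symmetric solution of the differential inequality P̃'(t) ⪰ A(t)P̃(t) + P̃(t)A(t)ᵀ + α(t)P̃(t) + (1/α(t))B(t)B(t)ᵀ with P̃(t₀) ⪰ P(t₀), then P̃(t) ⪰ P(t) for all t ≥ t₀. -/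
/-!
Put `M = A + (α/2) I`. Then `A X + X Aᵀ + α X = M X + X Mᵀ`, so the equation says that
`P' - (M P + P Mᵀ) = α⁻¹ B Bᵀ ⪰ 0`, and for `Δ = P̃ - P` the inequality gives
`Δ' - (M Δ + Δ Mᵀ) ⪰ 0`. Both claims thus reduce to a comparison principle: a symmetric `D`
with `D' ⪰ M D + D Mᵀ` and `D t₀ ⪰ 0` stays positive semidefinite for `t ≥ t₀`; periodicity
then extends the first claim to all `t`.

For the comparison principle fix `b ≥ t₀`, let `K` bound `xᵀ (M + Mᵀ) x` on `[t₀, b]` × unit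
sphere, and perturb `D` to `D + ε e^{(K+1)(t-t₀)} I`. At a first time `t` where its quadratic
form vanishes at a unit vector `x`, the perturbed matrix is still `⪰ 0`, so `x` is in its
kernel: `D x = -c x` with `c = ε e^{(K+1)(t-t₀)}`. Then
`xᵀ D' x ≥ xᵀ (M D + D Mᵀ) x = -c xᵀ (M + Mᵀ) x ≥ -c K`, and the form has derivative at least
`c > 0` at `t`, which is impossible for a positive function reaching zero. Let `ε → 0`.
-/

open Matrix Set Filter Topology

theorem HasDerivAt.nonpos_of_le_left {g : ℝ → ℝ} {d a t : ℝ} (hg : HasDerivAt g d t) (ha : a < t)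
    (hle : ∀ s ∈ Ioo a t, g t ≤ g s) : d ≤ 0 := by
  refine le_of_tendsto (hasDerivAt_iff_tendsto_slope_left_right.1 hg).1 ?_
  filter_upwards [Ioo_mem_nhdsLT ha] with s hs
  rw [slope_def_field]
  exact div_nonpos_of_nonneg_of_nonpos (sub_nonneg.2 (hle s hs)) (sub_nonpos.2 hs.2.le)

theorem forall_pos_of_hasDerivAt_pos_of_zero {X : Type*} [TopologicalSpace X] [CompactSpace X]
    {F : ℝ → X → ℝ} (hF : Continuous (Function.uncurry F)) {t₀ b : ℝ} (h₀ : ∀ x, 0 < F t₀ x)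
    (hderiv : ∀ t ∈ Ioc t₀ b, ∀ x, F t x = 0 → (∀ y, 0 ≤ F t y) →
      ∃ d > 0, HasDerivAt (F · x) d t) :
    ∀ t ∈ Icc t₀ b, ∀ x, 0 < F t x := by
  by_contra! hfail
  obtain ⟨t', ht', x', hx'⟩ := hfail
  set C := {p : ℝ × X | p.1 ∈ Icc t₀ b ∧ F p.1 p.2 ≤ 0}
  have hC : IsClosed C :=
    (isClosed_Icc.preimage continuous_fst).inter (isClosed_le hF continuous_const)
  have hbdd : BddBelow (Prod.fst '' C) := ⟨t₀, by rintro _ ⟨p, hp, rfl⟩; exact hp.1.1⟩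
  obtain ⟨⟨t, x⟩, ⟨htI, hx⟩, hfirst⟩ : sInf (Prod.fst '' C) ∈ Prod.fst '' C :=
    (isClosedMap_fst_of_compactSpace C hC).csInf_mem ⟨t', (t', x'), ⟨ht', hx'⟩, rfl⟩ hbdd
  dsimp only at htI hx hfirst
  have before : ∀ s ∈ Ico t₀ t, ∀ y, 0 < F s y := fun s hs y => by
    by_contra! h
    have := csInf_le hbdd ⟨(s, y), ⟨⟨hs.1, hs.2.le.trans htI.2⟩, h⟩, rfl⟩
    linarith [hs.2]
  have ht₀ : t₀ < t := htI.1.lt_of_ne fun h => (h₀ x).not_ge (h ▸ hx)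
  have nonneg : ∀ y, 0 ≤ F t y := fun y => by
    refine ge_of_tendsto (((hF.comp (Continuous.prodMk_left y)).tendsto t).mono_left
      (nhdsWithin_le_nhds (s := Iio t))) ?_
    filter_upwards [Ioo_mem_nhdsLT ht₀] with s hs
    exact (before s (Ioo_subset_Ico_self hs) y).le
  obtain ⟨d, hd, hdt⟩ := hderiv t ⟨ht₀, htI.2⟩ x (le_antisymm hx (nonneg x)) nonneg
  refine hd.not_ge (hdt.nonpos_of_le_left ht₀ fun s hs => ?_)
  exact hx.trans (before s (Ioo_subset_Ico_self hs) x).le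

theorem Function.Periodic.forall_of_forall_ge {α β : Type*} [AddCommGroup α] [PartialOrder α]
    [IsOrderedAddMonoid α] [Archimedean α] {f : α → β} {c : α} (hf : Periodic f c) (hc : 0 < c)
    {p : β → Prop} {t₀ : α} (h : ∀ t ≥ t₀, p (f t)) (t : α) : p (f t) := by
  obtain ⟨k, hk⟩ := Archimedean.arch (t₀ - t) hc
  rw [← hf.nsmul k t]
  exact h _ (sub_le_iff_le_add'.1 hk)

section

variable {ι : Type*} [Fintype ι]

theorem Matrix.add_half_smul_one_mul_add_mul_transpose {R : Type*} [Field R] [NeZero (2 : R)]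
    [DecidableEq ι] (A X : Matrix ι ι R) (c : R) :
    (A + (c / 2) • 1) * X + X * (A + (c / 2) • 1)ᵀ = A * X + X * Aᵀ + c • X := by
  simp only [transpose_add, transpose_smul, transpose_one, Matrix.add_mul, Matrix.mul_add,
    smul_mul, Matrix.mul_smul, Matrix.one_mul, Matrix.mul_one]
  rw [← add_halves c, add_smul, add_halves]
  abel

theorem EuclideanSpace.ofLp_dotProduct_self (x : EuclideanSpace ℝ ι) :
    x.ofLp ⬝ᵥ x.ofLp = ‖x‖ ^ 2 := by
  rw [← real_inner_self_eq_norm_sq, EuclideanSpace.inner_eq_star_dotProduct, star_trivial]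

theorem Matrix.posSemidef_of_forall_mem_sphere {A : Matrix ι ι ℝ} (hA : A.IsSymm)
    (h : ∀ x ∈ Metric.sphere (0 : EuclideanSpace ℝ ι) 1, 0 ≤ x.ofLp ⬝ᵥ A *ᵥ x.ofLp) :
    A.PosSemidef := by
  refine PosSemidef.of_dotProduct_mulVec_nonneg (isHermitian_iff_isSymm.2 hA) fun y => ?_
  rw [star_trivial]
  rcases eq_or_ne y 0 with rfl | hy
  · simp
  have hr : 0 < ‖WithLp.toLp 2 y‖ := norm_pos_iff.2 (by simpa using hy)
  have hu := h (‖WithLp.toLp 2 y‖⁻¹ • WithLp.toLp 2 y) (by simp [norm_smul, hr.ne'])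
  simp only [WithLp.ofLp_smul, mulVec_smul, smul_dotProduct,
    dotProduct_smul, smul_eq_mul] at hu
  exact nonneg_of_mul_nonneg_right (nonneg_of_mul_nonneg_right hu (by positivity)) (by positivity)

theorem hasDerivAt_dotProduct_mulVec {D : ℝ → Matrix ι ι ℝ} {D' : Matrix ι ι ℝ} {t : ℝ}
    (hD : ∀ i j, HasDerivAt (fun s => D s i j) (D' i j) t) (x : ι → ℝ) :
    HasDerivAt (fun s => x ⬝ᵥ D s *ᵥ x) (x ⬝ᵥ D' *ᵥ x) t := by
  simp only [dotProduct, mulVec]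
  exact HasDerivAt.fun_sum fun i _ => (HasDerivAt.fun_sum fun j _ =>
    (hD i j).mul_const (x j)).const_mul (x i)

theorem dotProduct_mul_add_mul_transpose_mulVec {M D : Matrix ι ι ℝ} (hD : D.IsSymm) {μ : ℝ}
    {x : ι → ℝ} (hx : D *ᵥ x = μ • x) :
    x ⬝ᵥ (M * D + D * Mᵀ) *ᵥ x = μ * (x ⬝ᵥ (M + Mᵀ) *ᵥ x) := by
  have hx' : x ᵥ* D = μ • x := by rw [← mulVec_transpose, hD.eq, hx]
  simp only [add_mulVec, ← mulVec_mulVec, dotProduct_add, hx, mulVec_smul, dotProduct_smul,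
    dotProduct_mulVec x D, hx', smul_dotProduct, smul_eq_mul]
  ring

theorem exists_bound_dotProduct_mulVec {N : ℝ → Matrix ι ι ℝ} (hN : Continuous N) {s : Set ℝ}
    (hs : IsCompact s) :
    ∃ K, ∀ t ∈ s, ∀ x ∈ Metric.sphere (0 : EuclideanSpace ℝ ι) 1,
      x.ofLp ⬝ᵥ N t *ᵥ x.ofLp ≤ K := by
  have hq : Continuous fun p : ℝ × EuclideanSpace ℝ ι => p.2.ofLp ⬝ᵥ N p.1 *ᵥ p.2.ofLp := by
    have hx : Continuous fun p : ℝ × EuclideanSpace ℝ ι => p.2.ofLp :=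
      (PiLp.continuous_ofLp 2 _).comp continuous_snd
    exact hx.dotProduct ((hN.comp continuous_fst).matrix_mulVec hx)
  obtain ⟨K, hK⟩ := (hs.prod (isCompact_sphere 0 1)).bddAbove_image hq.continuousOn
  exact ⟨K, fun t ht x hx => hK ⟨(t, x), ⟨ht, hx⟩, rfl⟩⟩

theorem neg_mul_dotProduct_mulVec_le_of_lyapunov [DecidableEq ι] {M D D' : Matrix ι ι ℝ}
    (hD : D.IsSymm) {c : ℝ} (hE : (D + c • 1).PosSemidef) {x : ι → ℝ}
    (hx : x ⬝ᵥ (D + c • 1) *ᵥ x = 0) (hsuper : (D' - (M * D + D * Mᵀ)).PosSemidef) :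
    -c * (x ⬝ᵥ (M + Mᵀ) *ᵥ x) ≤ x ⬝ᵥ D' *ᵥ x := by
  have hker : (D + c • 1) *ᵥ x = 0 := (hE.dotProduct_mulVec_zero_iff x).1 (by rwa [star_trivial])
  have heig : D *ᵥ x = (-c) • x := by
    rw [add_mulVec, smul_mulVec, one_mulVec] at hker
    rw [neg_smul]
    exact eq_neg_of_add_eq_zero_left hker
  have hsx := hsuper.dotProduct_mulVec_nonneg x
  rwa [star_trivial, sub_mulVec, dotProduct_sub, sub_nonneg,
    dotProduct_mul_add_mul_transpose_mulVec hD heig] at hsx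

theorem Matrix.pos_dotProduct_mulVec_add_mul_exp_of_lyapunov [DecidableEq ι]
    {M D D' : ℝ → Matrix ι ι ℝ} (hD : ∀ t, (D t).IsSymm)
    (hD' : ∀ t i j, HasDerivAt (fun s => D s i j) (D' t i j) t)
    (hsuper : ∀ t, (D' t - (M t * D t + D t * (M t)ᵀ)).PosSemidef) {t₀ b K ε : ℝ}
    (h₀ : (D t₀).PosSemidef)
    (hK : ∀ t ∈ Icc t₀ b, ∀ x ∈ Metric.sphere (0 : EuclideanSpace ℝ ι) 1,
      x.ofLp ⬝ᵥ (M t + (M t)ᵀ) *ᵥ x.ofLp ≤ K) (hε : 0 < ε) :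
    ∀ t ∈ Icc t₀ b, ∀ x : Metric.sphere (0 : EuclideanSpace ℝ ι) 1,
      0 < (x : EuclideanSpace ℝ ι).ofLp ⬝ᵥ D t *ᵥ (x : EuclideanSpace ℝ ι).ofLp +
        ε * Real.exp ((K + 1) * (t - t₀)) := by
  set w : ℝ → ℝ := fun t => Real.exp ((K + 1) * (t - t₀))
  have hw : ∀ t, HasDerivAt w ((K + 1) * w t) t := fun t => by
    simpa [w, mul_comm] using (((hasDerivAt_id t).sub_const t₀).const_mul (K + 1)).exp
  have hDcont : Continuous D := continuous_matrix fun i j =>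
    continuous_iff_continuousAt.2 fun t => (hD' t i j).continuousAt
  refine forall_pos_of_hasDerivAt_pos_of_zero ?_ ?_ ?_
  · have hx : Continuous fun p : ℝ × Metric.sphere (0 : EuclideanSpace ℝ ι) 1 =>
        (p.2 : EuclideanSpace ℝ ι).ofLp :=
      (PiLp.continuous_ofLp 2 _).comp (continuous_subtype_val.comp continuous_snd)
    exact (hx.dotProduct ((hDcont.comp continuous_fst).matrix_mulVec hx)).add
      (continuous_const.mul (by fun_prop : Continuous fun p : ℝ × Metric.sphere
        (0 : EuclideanSpace ℝ ι) 1 => Real.exp ((K + 1) * (p.1 - t₀))))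
  · intro x
    have hx := h₀.dotProduct_mulVec_nonneg (x : EuclideanSpace ℝ ι).ofLp
    rw [star_trivial] at hx
    simp only [sub_self, mul_zero, Real.exp_zero, mul_one]
    linarith
  · rintro t ⟨ht₀, htb⟩ ⟨x, hx⟩ hzero hnonneg
    set c := ε * w t
    have hshift : ∀ y ∈ Metric.sphere (0 : EuclideanSpace ℝ ι) 1,
        y.ofLp ⬝ᵥ (D t + c • 1) *ᵥ y.ofLp = y.ofLp ⬝ᵥ D t *ᵥ y.ofLp + c := fun y hy => by
      rw [add_mulVec, dotProduct_add, smul_mulVec, one_mulVec, dotProduct_smul,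
        EuclideanSpace.ofLp_dotProduct_self, mem_sphere_zero_iff_norm.1 hy, one_pow,
        smul_eq_mul, mul_one]
    have hE : (D t + c • 1).PosSemidef :=
      posSemidef_of_forall_mem_sphere ((hD t).add (isSymm_one.smul c)) fun y hy =>
        (hshift y hy).symm ▸ hnonneg ⟨y, hy⟩
    have hD'x := neg_mul_dotProduct_mulVec_le_of_lyapunov (hD t) hE
      (by rw [hshift x hx]; exact hzero) (hsuper t)
    have hc : 0 < c := mul_pos hε (Real.exp_pos _)
    have hbound := hK t ⟨ht₀.le, htb⟩ x hx
    refine ⟨_, ?_, (hasDerivAt_dotProduct_mulVec (hD' t) _).add ((hw t).const_mul ε)⟩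
    nlinarith

theorem Matrix.posSemidef_of_lyapunov_supersolution [DecidableEq ι]
    {M D D' : ℝ → Matrix ι ι ℝ} (hM : Continuous M) (hD : ∀ t, (D t).IsSymm)
    (hD' : ∀ t i j, HasDerivAt (fun s => D s i j) (D' t i j) t)
    (hsuper : ∀ t, (D' t - (M t * D t + D t * (M t)ᵀ)).PosSemidef) {t₀ : ℝ}
    (h₀ : (D t₀).PosSemidef) : ∀ t ≥ t₀, (D t).PosSemidef := by
  intro b hb
  obtain ⟨K, hK⟩ := exists_bound_dotProduct_mulVec (N := fun t => M t + (M t)ᵀ)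
    (hM.add hM.matrix_transpose) (isCompact_Icc (a := t₀) (b := b))
  refine posSemidef_of_forall_mem_sphere (hD b) fun x hx => le_of_forall_pos_lt_add fun δ hδ => ?_
  have hw : 0 < Real.exp ((K + 1) * (b - t₀)) := Real.exp_pos _
  simpa [hw.ne'] using pos_dotProduct_mulVec_add_mul_exp_of_lyapunov hD hD' hsuper h₀ hK
    (div_pos hδ hw) b ⟨hb, le_rfl⟩ ⟨x, hx⟩

end

theorem stmt_19_general (n m : ℕ) (T : ℝ) (hT : 0 < T)
    (A : ℝ → Matrix (Fin n) (Fin n) ℝ)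
    (B : ℝ → Matrix (Fin n) (Fin m) ℝ) (α : ℝ → ℝ)
    (hAcont : ∀ i j, Continuous fun t => A t i j)
    (hαcont : Continuous α) (hαpos : ∀ t, 0 < α t)
    (P P' : ℝ → Matrix (Fin n) (Fin n) ℝ)
    (hPsymm : ∀ t, (P t).IsSymm) (hPper : ∀ t, P (t + T) = P t)
    (hPdiff : ∀ t i j, HasDerivAt (fun s => P s i j) (P' t i j) t)
    (hPeq : ∀ t, P' t = A t * P t + P t * (A t)ᵀ + α t • P t + (α t)⁻¹ • (B t * (B t)ᵀ))
    (t₀ : ℝ) :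
    ((P t₀).PosSemidef → ∀ t, (P t).PosSemidef) ∧
    ∀ Ptil Ptil' : ℝ → Matrix (Fin n) (Fin n) ℝ,
      (∀ t, (Ptil t).IsSymm) → (∀ t, Ptil (t + T) = Ptil t) →
      (∀ t i j, HasDerivAt (fun s => Ptil s i j) (Ptil' t i j) t) →
      (∀ i j, Continuous fun t => Ptil' t i j) →
      (∀ t, (Ptil' t -
        (A t * Ptil t + Ptil t * (A t)ᵀ + α t • Ptil t + (α t)⁻¹ • (B t * (B t)ᵀ))).PosSemidef) →
      (Ptil t₀ - P t₀).PosSemidef →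
      ∀ t ≥ t₀, (Ptil t - P t).PosSemidef := by
  set M : ℝ → Matrix (Fin n) (Fin n) ℝ := fun t => A t + (α t / 2) • 1
  have hM : Continuous M :=
    (continuous_matrix hAcont).add ((hαcont.div_const 2).smul continuous_const)
  have hP : ∀ t, P' t - (M t * P t + P t * (M t)ᵀ) = (α t)⁻¹ • (B t * (B t)ᵀ) := fun t => by
    rw [add_half_smul_one_mul_add_mul_transpose, hPeq]
    abel
  have hBB : ∀ t, ((α t)⁻¹ • (B t * (B t)ᵀ)).PosSemidef := fun t =>
    (posSemidef_self_mul_conjTranspose (B t)).smul (inv_nonneg.2 (hαpos t).le)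
  refine ⟨fun h₀ => Function.Periodic.forall_of_forall_ge hPper hT
    (posSemidef_of_lyapunov_supersolution hM hPsymm hPdiff (fun t => hP t ▸ hBB t) h₀), ?_⟩
  intro Q Q' hQsymm _ hQdiff _ hQsuper h₀
  refine posSemidef_of_lyapunov_supersolution (D := fun t => Q t - P t)
    (D' := fun t => Q' t - P' t) hM (fun t => (hQsymm t).sub (hPsymm t))
    (fun t i j => (hQdiff t i j).sub (hPdiff t i j)) (fun t => ?_) h₀
  convert hQsuper t using 1
  calc Q' t - P' t - (M t * (Q t - P t) + (Q t - P t) * (M t)ᵀ)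
      = Q' t - (M t * Q t + Q t * (M t)ᵀ) - (P' t - (M t * P t + P t * (M t)ᵀ)) := by
        rw [Matrix.mul_sub, Matrix.sub_mul]
        abel
    _ = _ := by
        rw [hP, add_half_smul_one_mul_add_mul_transpose]
        abel

theorem stmt_19 (n m : ℕ) (T : ℝ) (hT : 0 < T)
    (A : ℝ → Matrix (Fin n) (Fin n) ℝ)
    (B : ℝ → Matrix (Fin n) (Fin m) ℝ) (α : ℝ → ℝ)
    (hAcont : ∀ i j, Continuous fun t => A t i j)
    (hBcont : ∀ i j, Continuous fun t => B t i j)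
    (hαcont : Continuous α) (hαpos : ∀ t, 0 < α t)
    (hAper : ∀ t, A (t + T) = A t) (hBper : ∀ t, B (t + T) = B t)
    (hαper : ∀ t, α (t + T) = α t)
    (P P' : ℝ → Matrix (Fin n) (Fin n) ℝ)
    (hPsymm : ∀ t, (P t).IsSymm) (hPper : ∀ t, P (t + T) = P t)
    (hPdiff : ∀ t i j, HasDerivAt (fun s => P s i j) (P' t i j) t)
    (hP'cont : ∀ i j, Continuous fun t => P' t i j)
    (hPeq : ∀ t, P' t = A t * P t + P t * (A t)ᵀ + α t • P t + (α t)⁻¹ • (B t * (B t)ᵀ))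
    (t₀ : ℝ) :
    ((P t₀).PosSemidef → ∀ t, (P t).PosSemidef) ∧
    ∀ Ptil Ptil' : ℝ → Matrix (Fin n) (Fin n) ℝ,
      (∀ t, (Ptil t).IsSymm) → (∀ t, Ptil (t + T) = Ptil t) →
      (∀ t i j, HasDerivAt (fun s => Ptil s i j) (Ptil' t i j) t) →
      (∀ i j, Continuous fun t => Ptil' t i j) →
      (∀ t, (Ptil' t -
        (A t * Ptil t + Ptil t * (A t)ᵀ + α t • Ptil t + (α t)⁻¹ • (B t * (B t)ᵀ))).PosSemidef) →
      (Ptil t₀ - P t₀).PosSemidef →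
      ∀ t ≥ t₀, (Ptil t - P t).PosSemidef :=
  stmt_19_general n m T hT A B α hAcont hαcont hαpos P P' hPsymm hPper hPdiff hPeq t₀
end
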